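/- Let ρ₀ and ρ₁ be the two-qubit density matrices ρ_b = (1/2)(P_b ⊗ (I₂/2)) + (1/2)((I₂/2) ⊗ (H * P_b * H)) for b = 0, 1. Then for every 4×4 complex matrix M such that M is positive semidefinite and I₄ − M is positive semidefinite, the real part of (1/2) · Tr(ρ₀ * M) + (1/2) · Tr(ρ₁ * (I₄ − M)) is at most 3/4. That is, no two-outcome measurement can guess Alice's uniformly random input bit in Protocol 1 with probability exceeding 3/4. -/

import Mathlib

open Matrix Kronecker ComplexOrder

noncomputable section

def P0 : Matrix (Fin 2) (Fin 2) ℂ := !![1, 0; 0, 0]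

def P1 : Matrix (Fin 2) (Fin 2) ℂ := !![0, 0; 0, 1]

/-- The Hadamard gate. -/
def Hg : Matrix (Fin 2) (Fin 2) ℂ := (Real.sqrt 2 : ℂ)⁻¹ • !![1, 1; 1, -1]

/-- The average state Alice sends in Protocol 1 when her input bit corresponds to the
projector `Pb`, as a 4×4 matrix via the lexicographic identification
`Fin 2 × Fin 2 ≃ Fin 4`. -/
def rho (Pb : Matrix (Fin 2) (Fin 2) ℂ) : Matrix (Fin 4) (Fin 4) ℂ :=
  Matrix.reindex finProdFinEquiv finProdFinEquiv
    ((1/2 : ℂ) • (Pb ⊗ₖ ((1/2 : ℂ) • (1 : Matrix (Fin 2) (Fin 2) ℂ))) +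
     (1/2 : ℂ) • (((1/2 : ℂ) • (1 : Matrix (Fin 2) (Fin 2) ℂ)) ⊗ₖ (Hg * Pb * Hg)))

/-!
Writing `ρ₀ = ρ₁ + A - B` with `A, B ≥ 0`, the success probability of `{M, 1 - M}` is
`½ Tr ρ₁ + ½ Tr A - ½ Tr (A (1 - M)) - ½ Tr (B M) ≤ ½ Tr ρ₁ + ½ Tr A`. Here
`ρ₀ - ρ₁ = ¼ (Z ⊗ 1 + 1 ⊗ X)` has eigenvalues `±½, 0, 0`, so its positive part `A` has
trace `½` and the bound is `½ + ¼ = ¾`.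
-/

section Discrimination

variable {n : Type*} [Fintype n] [DecidableEq n]

lemma Matrix.PosSemidef.trace_mul_nonneg {A B : Matrix n n ℂ} (hA : A.PosSemidef)
    (hB : B.PosSemidef) : 0 ≤ (A * B).trace := by
  open scoped MatrixOrder in
  obtain ⟨C, rfl⟩ := CStarAlgebra.nonneg_iff_eq_star_mul_self.mp hA.nonneg
  rw [Matrix.mul_assoc, Matrix.trace_mul_comm]
  exact (hB.mul_mul_conjTranspose_same C).trace_nonneg

/-- Success probability of guessing a uniform bit `b` from `ρ_b` by measuring `{M, 1 - M}` and
answering `0` on the outcome `M`. -/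
def guessProb (ρ₀ ρ₁ M : Matrix n n ℂ) : ℝ :=
  ((1/2 : ℂ) * (ρ₀ * M).trace + (1/2 : ℂ) * (ρ₁ * (1 - M)).trace).re

theorem guessProb_le_of_eq_add_sub {ρ₀ ρ₁ A B M : Matrix n n ℂ}
    (hρ : ρ₀ = ρ₁ + A - B) (hA : A.PosSemidef) (hB : B.PosSemidef) (hM : M.PosSemidef)
    (hM' : (1 - M).PosSemidef) :
    guessProb ρ₀ ρ₁ M ≤ (ρ₁.trace.re + A.trace.re) / 2 := by
  have hslack : (1/2 : ℂ) * (ρ₀ * M).trace + (1/2 : ℂ) * (ρ₁ * (1 - M)).trace =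
      (ρ₁.trace + A.trace) / 2 - ((A * (1 - M)).trace + (B * M).trace) / 2 := by
    subst hρ
    simp only [Matrix.add_mul, Matrix.sub_mul, Matrix.mul_sub, Matrix.mul_one, trace_add,
      trace_sub]
    ring
  have hnonneg := (Complex.le_def.mp
    (add_nonneg (hA.trace_mul_nonneg hM') (hB.trace_mul_nonneg hM))).1
  rw [guessProb, hslack]
  simp only [Complex.zero_re, Complex.sub_re, Complex.div_ofNat_re, Complex.add_re] at hnonneg ⊢
  linarith

end Discrimination

lemma inv_sqrt_two_mul_self : (Real.sqrt 2 : ℂ)⁻¹ * (Real.sqrt 2 : ℂ)⁻¹ = 1/2 := by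
  rw [← mul_inv, ← Complex.ofReal_mul, Real.mul_self_sqrt zero_le_two]
  norm_num

lemma Hg_mul_P0_mul_Hg : Hg * P0 * Hg = (1/2 : ℂ) • !![1, 1; 1, 1] := by
  simp only [Hg, P0, smul_mul_assoc, mul_smul_comm, smul_smul, inv_sqrt_two_mul_self]
  norm_num [Matrix.mul_fin_two]

lemma Hg_mul_P1_mul_Hg : Hg * P1 * Hg = (1/2 : ℂ) • !![1, -1; -1, 1] := by
  simp only [Hg, P1, smul_mul_assoc, mul_smul_comm, smul_smul, inv_sqrt_two_mul_self]
  norm_num [Matrix.mul_fin_two]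

lemma rho_P1 :
    rho P1 = !![1/8, -1/8, 0, 0; -1/8, 1/8, 0, 0; 0, 0, 3/8, -1/8; 0, 0, -1/8, 3/8] := by
  rw [rho, Hg_mul_P1_mul_Hg]
  ext i j
  fin_cases i <;> fin_cases j <;> simp [P1, finProdFinEquiv, Fin.divNat, Fin.modNat] <;> norm_num

lemma rho_P0 :
    rho P0 = !![3/8, 1/8, 0, 0; 1/8, 3/8, 0, 0; 0, 0, 1/8, 1/8; 0, 0, 1/8, 1/8] := by
  rw [rho, Hg_mul_P0_mul_Hg]
  ext i j
  fin_cases i <;> fin_cases j <;> simp [P0, finProdFinEquiv, Fin.divNat, Fin.modNat] <;> norm_num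

lemma trace_rho_P1 : (rho P1).trace = 1 := by
  rw [rho_P1]
  simp [trace, Fin.sum_univ_four]
  norm_num

/-- The two vectors are `|0,+⟩ / √2` and `|1,-⟩ / √2`. -/
lemma rho_P0_eq : rho P0 = rho P1 + vecMulVec ![1/2, 1/2, 0, 0] (star ![1/2, 1/2, 0, 0]) -
    vecMulVec ![0, 0, 1/2, -1/2] (star ![0, 0, 1/2, -1/2]) := by
  rw [rho_P0, rho_P1]
  ext i j
  simp only [Matrix.add_apply, Matrix.sub_apply, vecMulVec_apply]
  fin_cases i <;> fin_cases j <;> simp <;> norm_num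

/-- No two-outcome measurement `{M, I − M}` can guess Alice's uniformly random input
bit in Protocol 1 with probability exceeding 3/4. -/
theorem guessing_probability_le_three_quarters (M : Matrix (Fin 4) (Fin 4) ℂ)
    (hM : M.PosSemidef) (hM' : ((1 : Matrix (Fin 4) (Fin 4) ℂ) - M).PosSemidef) :
    ((1/2 : ℂ) * (rho P0 * M).trace +
      (1/2 : ℂ) * (rho P1 * ((1 : Matrix (Fin 4) (Fin 4) ℂ) - M)).trace).re ≤ 3/4 := by
  refine (guessProb_le_of_eq_add_sub rho_P0_eq (posSemidef_vecMulVec_self_star _)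
    (posSemidef_vecMulVec_self_star _) hM hM').trans_eq ?_
  rw [trace_rho_P1, trace_vecMulVec]
  simp [dotProduct, Fin.sum_univ_four]
  norm_num
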